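/- Suppose the cocycle σ is nondegenerate, i.e. for every nonzero m ∈ ℤⁿ there exists k ∈ {1, …, n} with ∏_{j=1}^n θ_{jk}^{m_j} ≠ 1. Let v : ℤⁿ → [1,∞) be any submultiplicative weight (no symmetry or GRS-condition required). Then the Banach algebra ℓ¹_v(ℤⁿ, θ) is simple: every closed two-sided ideal of ℓ¹_v(ℤⁿ, θ) is {0} or all of ℓ¹_v(ℤⁿ, θ). -/

import Mathlib

open scoped BigOperators
open Filter Topology

noncomputable section

/-- The cocycle σ(l,m) = ∏_{1 ≤ j < k ≤ n} θ_{k,j}^{l_k m_j}. -/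
def coc {n : ℕ} (θ : Fin n → Fin n → ℂ) (l m : Fin n → ℤ) : ℂ :=
  ∏ p ∈ Finset.univ.filter (fun p : Fin n × Fin n => p.1 < p.2), θ p.2 p.1 ^ (l p.2 * m p.1)

/-- Twisted convolution (f ♮ g)(x) = Σ_y f(y) g(x−y) σ(y, x−y). -/
def tconv {n : ℕ} (σ : (Fin n → ℤ) → (Fin n → ℤ) → ℂ) (f g : (Fin n → ℤ) → ℂ) :
    (Fin n → ℤ) → ℂ :=
  fun x => ∑' y, f y * g (x - y) * σ y (x - y)

/-- δ_y, the indicator of {y}. -/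
def delta {n : ℕ} (y : Fin n → ℤ) : (Fin n → ℤ) → ℂ := fun x => if x = y then 1 else 0

/-!
Take `h ∈ I` with `h m ≠ 0`. Conjugating by `δ_y` multiplies `h` by a constant times the
character `χ_y(x) = ∏ₖ ρₖ(x)^{yₖ}`, where `ρₖ(x) = ∏ⱼ θₖⱼ^{xⱼ}` comes from the commutator
`σ(y, x) / σ(x, y)`; so `I` contains `x ↦ χ_y(x - m) h(x)` for every `y`. Averaging over `y` in
the box `[0, N)ⁿ` gives the multiplier `∏ₖ (1/N) ∑_{t<N} ρₖ(x - m)^t`, which is bounded by `1`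
and, by nondegeneracy, tends pointwise to the indicator of `{m}`. Dominated convergence in
`ℓ¹_v` and closedness of `I` give `δ_m ∈ I`, hence `δ_0 ∈ I`, and `δ_0` is a unit for `♮`.
-/

open Finset

theorem prod_eq_prod_filter_lt_mul_swap {ι M : Type*} [Fintype ι] [LinearOrder ι]
    [CommMonoid M] (F : ι × ι → M) (hF : ∀ i, F (i, i) = 1) :
    ∏ p, F p = ∏ p with p.1 < p.2, F p * F p.swap := by
  rw [prod_mul_distrib, ← prod_filter_mul_prod_filter_not univ (fun p : ι × ι => p.1 < p.2)]
  congr 1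
  have hswap : ∏ p : ι × ι with p.1 < p.2, F p.swap = ∏ p : ι × ι with p.2 < p.1, F p :=
    prod_equiv (Equiv.prodComm ι ι) (by simp) (by simp)
  rw [hswap]
  refine (prod_subset (fun p => by simpa using le_of_lt) fun p hp hlt => ?_).symm
  obtain ⟨i, j⟩ := p
  simp only [mem_filter, mem_univ, true_and, not_lt] at hp hlt
  obtain rfl := le_antisymm hlt hp
  exact hF i

theorem tendsto_tsum_norm_sub_mul_of_tendsto {α R : Type*} [NormedRing R] {v : α → ℝ}
    (hv : ∀ x, 0 ≤ v x) {h : α → R} (hh : Summable fun x => ‖h x‖ * v x)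
    {c : ℕ → α → R} {g : α → R} (hc : ∀ N x, ‖c N x‖ ≤ 1)
    (hg : ∀ x, Tendsto (fun N => c N x) atTop (𝓝 (g x))) :
    Tendsto (fun N => ∑' x, ‖g x * h x - c N x * h x‖ * v x) atTop (𝓝 0) := by
  have hg1 : ∀ x, ‖g x‖ ≤ 1 := fun x => le_of_tendsto' (hg x).norm (hc · x)
  have hpt : ∀ x, Tendsto (fun N => ‖g x * h x - c N x * h x‖ * v x) atTop (𝓝 0) := by
    intro x
    have := (tendsto_const_nhds (x := g x * h x)).sub ((hg x).mul_const (h x))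
    simpa using this.norm.mul_const (v x)
  have hbound : ∀ N x, ‖‖g x * h x - c N x * h x‖ * v x‖ ≤ 2 * (‖h x‖ * v x) := by
    intro N x
    rw [norm_mul, norm_norm, Real.norm_of_nonneg (hv x), ← sub_mul, ← mul_assoc]
    refine mul_le_mul_of_nonneg_right ?_ (hv x)
    calc ‖(g x - c N x) * h x‖ ≤ (‖g x‖ + ‖c N x‖) * ‖h x‖ :=
          (norm_mul_le _ _).trans (by gcongr; exact norm_sub_le _ _)
      _ ≤ 2 * ‖h x‖ := by gcongr; linarith [hg1 x, hc N x]
  simpa using tendsto_tsum_of_dominated_convergence (hh.mul_left 2) hpt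
    (Eventually.of_forall hbound)

def geomAvg (z : ℂ) (N : ℕ) : ℂ := (∑ t ∈ range N, z ^ t) / N

theorem geomAvg_one {N : ℕ} (hN : N ≠ 0) : geomAvg 1 N = 1 := by
  simp [geomAvg, hN]

theorem norm_geomAvg_le {z : ℂ} (hz : ‖z‖ ≤ 1) (N : ℕ) : ‖geomAvg z N‖ ≤ 1 := by
  rw [geomAvg, norm_div, Complex.norm_natCast]
  refine div_le_one_of_le₀ ?_ N.cast_nonneg
  calc ‖∑ t ∈ range N, z ^ t‖ ≤ ∑ t ∈ range N, ‖z‖ ^ t :=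
        norm_sum_le_of_le _ fun t _ => (norm_pow _ _).le
    _ ≤ ∑ t ∈ range N, 1 := sum_le_sum fun t _ => pow_le_one₀ (norm_nonneg _) hz
    _ = N := by simp

theorem tendsto_geomAvg_zero {z : ℂ} (hz : ‖z‖ ≤ 1) (hz1 : z ≠ 1) :
    Tendsto (geomAvg z) atTop (𝓝 0) := by
  refine squeeze_zero_norm (fun N => ?_)
    (tendsto_const_div_atTop_nhds_zero_nat (2 / ‖z - 1‖))
  rw [geomAvg, geom_sum_eq hz1, norm_div, norm_div, Complex.norm_natCast]
  gcongr
  calc ‖z ^ N - 1‖ ≤ ‖z‖ ^ N + ‖(1 : ℂ)‖ := (norm_sub_le _ _).trans_eq (by rw [norm_pow])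
    _ ≤ 2 := by rw [norm_one]; linarith [pow_le_one₀ (norm_nonneg z) hz (n := N)]

theorem prod_geomAvg {ι : Type*} [Fintype ι] [DecidableEq ι] (w : ι → ℂ) (N : ℕ) :
    ∏ k, geomAvg (w k) N =
      (∑ t ∈ Fintype.piFinset fun _ => range N, ∏ k, w k ^ t k) /
        (N : ℂ) ^ Fintype.card ι := by
  simp only [geomAvg, prod_div_distrib, prod_const, card_univ, prod_univ_sum]

theorem tendsto_prod_geomAvg {ι : Type*} [Fintype ι] {w : ι → ℂ} (hw : ∀ k, ‖w k‖ ≤ 1) :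
    Tendsto (fun N => ∏ k, geomAvg (w k) N) atTop
      (𝓝 (if ∀ k, w k = 1 then 1 else 0)) := by
  split_ifs with h1
  · refine tendsto_const_nhds.congr' ?_
    filter_upwards [eventually_ne_atTop 0] with N hN
    simp [h1, geomAvg_one hN]
  · obtain ⟨k₀, hk₀⟩ := not_forall.mp h1
    refine squeeze_zero_norm (fun N => ?_)
      (by simpa using (tendsto_geomAvg_zero (hw k₀) hk₀).norm)
    classical
    rw [norm_prod, ← mul_prod_erase univ _ (mem_univ k₀)]
    exact mul_le_of_le_one_right (norm_nonneg _)
      (prod_le_one (fun _ _ => norm_nonneg _) fun k _ => norm_geomAvg_le (hw k) N)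

section Delta

variable {n : ℕ}

theorem summable_norm_delta_mul (y : Fin n → ℤ) (v : (Fin n → ℤ) → ℝ) :
    Summable fun x => ‖delta y x‖ * v x :=
  summable_of_ne_finset_zero (s := {y}) fun x hx => by simp_all [delta]

theorem tconv_delta_left (σ : (Fin n → ℤ) → (Fin n → ℤ) → ℂ) (y : Fin n → ℤ)
    (h : (Fin n → ℤ) → ℂ) : tconv σ (delta y) h = fun x => h (x - y) * σ y (x - y) := by
  funext x
  rw [tconv, tsum_eq_single y fun z hz => by simp [delta, hz]]
  simp [delta]

theorem tconv_delta_right (σ : (Fin n → ℤ) → (Fin n → ℤ) → ℂ) (z : Fin n → ℤ)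
    (h : (Fin n → ℤ) → ℂ) : tconv σ h (delta z) = fun x => h (x - z) * σ (x - z) z := by
  funext x
  rw [tconv, tsum_eq_single (x - z)]
  · simp [delta]
  · intro y hy
    have : x - y ≠ z := fun h => hy (by rw [← h]; abel)
    simp [delta, this]

theorem tconv_delta_delta (σ : (Fin n → ℤ) → (Fin n → ℤ) → ℂ) (y z : Fin n → ℤ) :
    tconv σ (delta y) (delta z) = fun x => σ y z * delta (y + z) x := by
  rw [tconv_delta_left]
  funext x
  by_cases hx : x = y + z
  · simp [delta, hx]
  · have : x - y ≠ z := fun h => hx (by rw [← h]; abel)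
    simp [delta, hx, this]

end Delta

section Cocycle

variable {n : ℕ} {θ : Fin n → Fin n → ℂ}

def rowProd (θ : Fin n → Fin n → ℂ) (x : Fin n → ℤ) (k : Fin n) : ℂ := ∏ j, θ k j ^ x j

theorem norm_rowProd (hθ : ∀ j k, ‖θ j k‖ = 1) (x : Fin n → ℤ) (k : Fin n) :
    ‖rowProd θ x k‖ = 1 := by
  simp [rowProd, norm_prod, norm_zpow, hθ]

theorem rowProd_eq_inv (hθ : ∀ j k, θ j k * θ k j = 1) (x : Fin n → ℤ) (k : Fin n) :
    rowProd θ x k = (∏ j, θ j k ^ x j)⁻¹ := by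
  simp only [rowProd, ← prod_inv_distrib, ← inv_zpow, ← eq_inv_of_mul_eq_one_right (hθ _ k)]

theorem rowProd_ne_zero (hθ : ∀ j k, θ j k ≠ 0) (x : Fin n → ℤ) (k : Fin n) :
    rowProd θ x k ≠ 0 :=
  prod_ne_zero_iff.mpr fun j _ => zpow_ne_zero _ (hθ k j)

theorem rowProd_sub (hθ : ∀ j k, θ j k ≠ 0) (x y : Fin n → ℤ) (k : Fin n) :
    rowProd θ (x - y) k = rowProd θ x k / rowProd θ y k := by
  simp only [rowProd, ← prod_div_distrib, Pi.sub_apply, zpow_sub₀ (hθ k _)]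

theorem coc_ne_zero (hθ : ∀ j k, θ j k ≠ 0) (l m : Fin n → ℤ) : coc θ l m ≠ 0 :=
  prod_ne_zero_iff.mpr fun p _ => zpow_ne_zero _ (hθ p.2 p.1)

theorem coc_zero_right (l : Fin n → ℤ) : coc θ l 0 = 1 := by
  simp [coc]

theorem coc_neg_right (l m : Fin n → ℤ) : coc θ l (-m) = (coc θ l m)⁻¹ := by
  simp only [coc, ← prod_inv_distrib, Pi.neg_apply, mul_neg, zpow_neg]

theorem coc_add_left (hθ : ∀ j k, θ j k ≠ 0) (l l' m : Fin n → ℤ) :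
    coc θ (l + l') m = coc θ l m * coc θ l' m := by
  simp only [coc, ← prod_mul_distrib, Pi.add_apply, add_mul, zpow_add₀ (hθ _ _)]

theorem coc_mul_inv_coc_swap (hθ : ∀ j k, θ j k * θ k j = 1) (hdiag : ∀ j, θ j j = 1)
    (x y : Fin n → ℤ) : coc θ y x * (coc θ x y)⁻¹ = ∏ k, rowProd θ x k ^ y k := by
  have hinv : ∀ j k, θ j k = (θ k j)⁻¹ := fun j k => eq_inv_of_mul_eq_one_left (hθ j k)
  set F : Fin n × Fin n → ℂ := fun p => θ p.2 p.1 ^ (x p.1 * y p.2)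
  calc coc θ y x * (coc θ x y)⁻¹ = ∏ p with p.1 < p.2, F p * F p.swap := by
        rw [coc, coc, ← prod_inv_distrib, ← prod_mul_distrib]
        refine prod_congr rfl fun p _ => ?_
        simp only [F, Prod.fst_swap, Prod.snd_swap, hinv p.1 p.2, inv_zpow, mul_comm (y _)]
    _ = ∏ p, F p := (prod_eq_prod_filter_lt_mul_swap F (by simp [F, hdiag])).symm
    _ = ∏ k, rowProd θ x k ^ y k := by
        simp only [F, Fintype.prod_prod_type, rowProd, ← prod_zpow, ← zpow_mul]
        exact prod_comm

theorem tconv_tconv_delta_neg (hθ : ∀ j k, θ j k * θ k j = 1) (hdiag : ∀ j, θ j j = 1)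
    (y : Fin n → ℤ) (h : (Fin n → ℤ) → ℂ) :
    tconv (coc θ) (tconv (coc θ) (delta y) h) (delta (-y)) =
      fun x => coc θ y (-y) * (∏ k, rowProd θ x k ^ y k) * h x := by
  have hθ0 : ∀ j k, θ j k ≠ 0 := fun j k => left_ne_zero_of_mul_eq_one (hθ j k)
  funext x
  simp only [tconv_delta_right, tconv_delta_left, sub_neg_eq_add, add_sub_cancel_right]
  rw [coc_add_left hθ0, coc_neg_right, ← coc_mul_inv_coc_swap hθ hdiag]
  ring

end Cocycle

structure IsClosedTwistedIdeal {n : ℕ} (σ : (Fin n → ℤ) → (Fin n → ℤ) → ℂ)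
    (v : (Fin n → ℤ) → ℝ) (I : Set ((Fin n → ℤ) → ℂ)) : Prop where
  summable : ∀ h ∈ I, Summable fun x => ‖h x‖ * v x
  zero_mem : (fun _ => (0 : ℂ)) ∈ I
  add_mem : ∀ h₁ ∈ I, ∀ h₂ ∈ I, (fun x => h₁ x + h₂ x) ∈ I
  smul_mem : ∀ c : ℂ, ∀ h ∈ I, (fun x => c * h x) ∈ I
  closed : ∀ f : (Fin n → ℤ) → ℂ, Summable (fun x => ‖f x‖ * v x) →
    (∀ ε > (0 : ℝ), ∃ h ∈ I, ∑' x, ‖f x - h x‖ * v x < ε) → f ∈ I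
  tconv_mem : ∀ f : (Fin n → ℤ) → ℂ, Summable (fun x => ‖f x‖ * v x) →
    ∀ h ∈ I, tconv σ f h ∈ I ∧ tconv σ h f ∈ I

namespace IsClosedTwistedIdeal

variable {n : ℕ} {σ : (Fin n → ℤ) → (Fin n → ℤ) → ℂ} {v : (Fin n → ℤ) → ℝ}
  {I : Set ((Fin n → ℤ) → ℂ)}

def toSubmodule (hI : IsClosedTwistedIdeal σ v I) : Submodule ℂ ((Fin n → ℤ) → ℂ) where
  carrier := I
  add_mem' {h₁ h₂} h₁I h₂I := hI.add_mem h₁ h₁I h₂ h₂I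
  zero_mem' := hI.zero_mem
  smul_mem' := hI.smul_mem

theorem mem_of_tendsto (hI : IsClosedTwistedIdeal σ v I) {f : (Fin n → ℤ) → ℂ}
    (hf : Summable fun x => ‖f x‖ * v x) {a : ℕ → (Fin n → ℤ) → ℂ} (ha : ∀ N, a N ∈ I)
    (hlim : Tendsto (fun N => ∑' x, ‖f x - a N x‖ * v x) atTop (𝓝 0)) : f ∈ I :=
  hI.closed f hf fun _ hε =>
    let ⟨N, hN⟩ := (hlim.eventually_lt_const hε).exists
    ⟨a N, ha N, hN⟩

theorem delta_zero_mem (hI : IsClosedTwistedIdeal σ v I) {m : Fin n → ℤ}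
    (hσ : σ (-m) m ≠ 0) (hm : delta m ∈ I) : delta 0 ∈ I := by
  have := (hI.tconv_mem _ (summable_norm_delta_mul (-m) v) _ hm).1
  have := hI.smul_mem (σ (-m) m)⁻¹ _ this
  simpa only [tconv_delta_delta, neg_add_cancel, inv_mul_cancel_left₀ hσ] using this

theorem mem_of_delta_zero_mem (hI : IsClosedTwistedIdeal σ v I) (hσ : ∀ x, σ x 0 = 1)
    (h0 : delta 0 ∈ I) {f : (Fin n → ℤ) → ℂ} (hf : Summable fun x => ‖f x‖ * v x) :
    f ∈ I := by
  simpa only [tconv_delta_right, sub_zero, hσ, mul_one] using (hI.tconv_mem f hf _ h0).1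

variable {θ : Fin n → Fin n → ℂ}

theorem rowProd_mul_mem (hI : IsClosedTwistedIdeal (coc θ) v I)
    (hθ : ∀ j k, θ j k * θ k j = 1) (hdiag : ∀ j, θ j j = 1)
    {h : (Fin n → ℤ) → ℂ} (hh : h ∈ I)
    (m y : Fin n → ℤ) : (fun x => (∏ k, rowProd θ (x - m) k ^ y k) * h x) ∈ I := by
  have hθ0 : ∀ j k, θ j k ≠ 0 := fun j k => left_ne_zero_of_mul_eq_one (hθ j k)
  have hconj := (hI.tconv_mem _ (summable_norm_delta_mul (-y) v) _
    (hI.tconv_mem _ (summable_norm_delta_mul y v) h hh).1).2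
  rw [tconv_tconv_delta_neg hθ hdiag] at hconj
  convert hI.smul_mem (coc θ y (-y) * ∏ k, rowProd θ m k ^ y k)⁻¹ _ hconj using 2 with x
  have hm : ∏ k, rowProd θ m k ^ y k ≠ 0 :=
    prod_ne_zero_iff.mpr fun k _ => zpow_ne_zero _ (rowProd_ne_zero hθ0 m k)
  simp only [rowProd_sub hθ0, div_zpow, prod_div_distrib]
  field_simp [coc_ne_zero hθ0 y (-y)]

theorem geomAvg_mul_mem (hI : IsClosedTwistedIdeal (coc θ) v I)
    (hθ : ∀ j k, θ j k * θ k j = 1) (hdiag : ∀ j, θ j j = 1)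
    {h : (Fin n → ℤ) → ℂ} (hh : h ∈ I)
    (m : Fin n → ℤ) (N : ℕ) :
    (fun x => (∏ k, geomAvg (rowProd θ (x - m) k) N) * h x) ∈ I := by
  classical
  have hsum : (fun x => (∏ k, geomAvg (rowProd θ (x - m) k) N) * h x) =
      ∑ t ∈ Fintype.piFinset fun _ => range N, ((N : ℂ) ^ n)⁻¹ •
        fun x => (∏ k, rowProd θ (x - m) k ^ (t k : ℤ)) * h x := by
    funext x
    simp [prod_geomAvg, Finset.sum_apply, div_eq_inv_mul, sum_mul, mul_sum, mul_assoc]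
  rw [hsum]
  exact hI.toSubmodule.sum_mem fun t _ =>
    hI.toSubmodule.smul_mem _ (hI.rowProd_mul_mem hθ hdiag hh m _)

theorem delta_mem_of_apply_ne_zero (hI : IsClosedTwistedIdeal (coc θ) v I)
    (hv : ∀ x, 0 ≤ v x)
    (hθ : ∀ j k, θ j k * θ k j = 1) (hdiag : ∀ j, θ j j = 1)
    (hnorm : ∀ x k, ‖rowProd θ x k‖ ≤ 1) (hsep : ∀ x ≠ 0, ∃ k, rowProd θ x k ≠ 1)
    {h : (Fin n → ℤ) → ℂ} (hh : h ∈ I) {m : Fin n → ℤ} (hm : h m ≠ 0) : delta m ∈ I := by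
  have hlim : ∀ x, Tendsto (fun N => ∏ k, geomAvg (rowProd θ (x - m) k) N) atTop
      (𝓝 (delta m x)) := by
    intro x
    convert tendsto_prod_geomAvg (hnorm (x - m)) using 2
    by_cases hx : x = m
    · simp [delta, hx, rowProd]
    · obtain ⟨k, hk⟩ := hsep (x - m) (sub_ne_zero.mpr hx)
      rw [if_neg fun hall => hk (hall k)]
      simp [delta, hx]
  have hmul : (fun x => delta m x * h x) ∈ I := by
    refine hI.mem_of_tendsto
      (summable_of_ne_finset_zero (s := {m}) fun x hx => by simp_all [delta])
      (hI.geomAvg_mul_mem hθ hdiag hh m) ?_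
    refine tendsto_tsum_norm_sub_mul_of_tendsto hv (hI.summable h hh) (fun N x => ?_) hlim
    rw [norm_prod]
    exact prod_le_one (fun _ _ => norm_nonneg _) fun k _ => norm_geomAvg_le (hnorm _ k) N
  convert hI.smul_mem (h m)⁻¹ _ hmul using 1
  funext x
  by_cases hx : x = m <;> simp [delta, hx, hm]

end IsClosedTwistedIdeal

theorem statement12_general {n : ℕ} (θ : Fin n → Fin n → ℂ)
    (hUnit : ∀ j k, ‖θ j k‖ = 1)
    (hHerm : ∀ j k, θ k j = starRingEnd ℂ (θ j k))
    (hDiag : ∀ j, θ j j = 1)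
    (hNondeg : ∀ m : Fin n → ℤ, m ≠ 0 → ∃ k : Fin n, (∏ j : Fin n, θ j k ^ (m j)) ≠ 1)
    (v : (Fin n → ℤ) → ℝ)
    (hv1 : ∀ x, 1 ≤ v x)
    (I : Set ((Fin n → ℤ) → ℂ))
    -- I consists of ℓ¹_v functions
    (hIsub : ∀ h ∈ I, Summable (fun x => ‖h x‖ * v x))
    -- I is a linear subspace
    (hI0 : (fun _ => (0 : ℂ)) ∈ I)
    (hIadd : ∀ h₁ ∈ I, ∀ h₂ ∈ I, (fun x => h₁ x + h₂ x) ∈ I)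
    (hIsmul : ∀ c : ℂ, ∀ h ∈ I, (fun x => c * h x) ∈ I)
    -- I is closed in the ℓ¹_v-norm
    (hIclosed : ∀ f : (Fin n → ℤ) → ℂ, Summable (fun x => ‖f x‖ * v x) →
      (∀ ε > (0:ℝ), ∃ h ∈ I, (∑' x, ‖f x - h x‖ * v x) < ε) → f ∈ I)
    -- I is a two-sided ideal for twisted convolution
    (hIideal : ∀ f : (Fin n → ℤ) → ℂ, Summable (fun x => ‖f x‖ * v x) →
      ∀ h ∈ I, tconv (coc θ) f h ∈ I ∧ tconv (coc θ) h f ∈ I) :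
    (∀ h ∈ I, h = fun _ => (0 : ℂ)) ∨
      (∀ f : (Fin n → ℤ) → ℂ, Summable (fun x => ‖f x‖ * v x) → f ∈ I) := by
  have hθ : ∀ j k, θ j k * θ k j = 1 := fun j k => by
    rw [hHerm j k, Complex.mul_conj, Complex.normSq_eq_norm_sq, hUnit, one_pow,
      Complex.ofReal_one]
  have hθ0 : ∀ j k, θ j k ≠ 0 := fun j k => left_ne_zero_of_mul_eq_one (hθ j k)
  have hI : IsClosedTwistedIdeal (coc θ) v I := ⟨hIsub, hI0, hIadd, hIsmul, hIclosed, hIideal⟩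
  refine or_iff_not_imp_left.mpr fun hI_ne => ?_
  obtain ⟨h, hh, hne⟩ := not_forall₂.mp hI_ne
  obtain ⟨m, hm⟩ := Function.ne_iff.mp hne
  have hsep : ∀ x ≠ 0, ∃ k, rowProd θ x k ≠ 1 := fun x hx =>
    (hNondeg x hx).imp fun k hk => by rwa [rowProd_eq_inv hθ, inv_ne_one]
  have hδm := hI.delta_mem_of_apply_ne_zero (fun x => zero_le_one.trans (hv1 x)) hθ hDiag
    (fun x k => (norm_rowProd hUnit x k).le) hsep hh hm
  exact fun f hf =>
    hI.mem_of_delta_zero_mem coc_zero_right (hI.delta_zero_mem (coc_ne_zero hθ0 _ _) hδm) hf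

/-- if the cocycle σ is nondegenerate, then for any submultiplicative
weight v the Banach algebra ℓ¹_v(ℤⁿ, θ) is simple: every closed two-sided ideal I
(a norm-closed linear subspace of ℓ¹_v that absorbs twisted convolution on both
sides) is {0} or all of ℓ¹_v. -/
theorem statement12 {n : ℕ} (θ : Fin n → Fin n → ℂ)
    (hUnit : ∀ j k, ‖θ j k‖ = 1)
    (hHerm : ∀ j k, θ k j = starRingEnd ℂ (θ j k))
    (hDiag : ∀ j, θ j j = 1)
    (hNondeg : ∀ m : Fin n → ℤ, m ≠ 0 → ∃ k : Fin n, (∏ j : Fin n, θ j k ^ (m j)) ≠ 1)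
    (v : (Fin n → ℤ) → ℝ)
    (hv1 : ∀ x, 1 ≤ v x)
    (hvsub : ∀ x y, v (x + y) ≤ v x * v y)
    (I : Set ((Fin n → ℤ) → ℂ))
    -- I consists of ℓ¹_v functions
    (hIsub : ∀ h ∈ I, Summable (fun x => ‖h x‖ * v x))
    -- I is a linear subspace
    (hI0 : (fun _ => (0 : ℂ)) ∈ I)
    (hIadd : ∀ h₁ ∈ I, ∀ h₂ ∈ I, (fun x => h₁ x + h₂ x) ∈ I)
    (hIsmul : ∀ c : ℂ, ∀ h ∈ I, (fun x => c * h x) ∈ I)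
    -- I is closed in the ℓ¹_v-norm
    (hIclosed : ∀ f : (Fin n → ℤ) → ℂ, Summable (fun x => ‖f x‖ * v x) →
      (∀ ε > (0:ℝ), ∃ h ∈ I, (∑' x, ‖f x - h x‖ * v x) < ε) → f ∈ I)
    -- I is a two-sided ideal for twisted convolution
    (hIideal : ∀ f : (Fin n → ℤ) → ℂ, Summable (fun x => ‖f x‖ * v x) →
      ∀ h ∈ I, tconv (coc θ) f h ∈ I ∧ tconv (coc θ) h f ∈ I) :
    (∀ h ∈ I, h = fun _ => (0 : ℂ)) ∨
      (∀ f : (Fin n → ℤ) → ℂ, Summable (fun x => ‖f x‖ * v x) → f ∈ I) :=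
  statement12_general θ hUnit hHerm hDiag hNondeg v hv1 I hIsub hI0 hIadd hIsmul hIclosed hIideal
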